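/- arXiv:2007.14861 — 2 statements merged into one kernel-verified Lean document; each statement's English description precedes it below -/
import Mathlib

section
/- Privacy of additive secret sharing (core of the privacy proof of the Secure Sum Protocol): Let m, n, S be positive integers with S ≥ 2 and fix a secret X ∈ (ℤ_m)^n. Let R_1,…,R_{S−1} be independent uniformly distributed random vectors in (ℤ_m)^n and set R_S := X − Σ_{j=1}^{S−1} R_j (mod m). Then for every index j* ∈ {1,…,S}, the joint distribution of the S−1 shares (R_j)_{j ≠ j*} is the uniform distribution on ((ℤ_m)^n)^{S−1}; in particular, this distribution does not depend on X. -/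
lemma map_uniformOfFintype_equiv {α β : Type*} [Fintype α] [Nonempty α]
    [Fintype β] [Nonempty β] (e : α ≃ β) :
    (PMF.uniformOfFintype α).map e = PMF.uniformOfFintype β := by
  ext b
  rw [PMF.map_apply, tsum_eq_single (e.symm b)]
  · simp [PMF.uniformOfFintype_apply, Fintype.card_congr e]
  · intro a ha
    rw [if_neg]
    intro h
    exact ha (by simp [h])

/-- Privacy of additive secret sharing: fix a secret `X ∈ (ℤ_m)^n` and let
`R 0, …, R (S-2)` be independent uniform random vectors in `(ℤ_m)^n` (modeled
by the uniform distribution on tuples `Fin (S-1) → Fin n → ZMod m`).  The last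
share is `X - ∑ics R j`.  Then for every server index `j*`, the joint
distribution of the `S - 1` shares seen by the servers other than `j*` is the
uniform distribution on `({j // j ≠ j*} → Fin n → ZMod m)`; in particular it
does not depend on `X`. -/
theorem additive_secret_sharing_private (m n S : ℕ) (hm : 0 < m) (hn : 0 < n)
    (hS : 2 ≤ S) (X : Fin n → ZMod m) (jstar : Fin S) :
    haveI : NeZero m := ⟨hm.ne'⟩
    (PMF.uniformOfFintype (Fin (S - 1) → Fin n → ZMod m)).map
        (fun r (j : {j : Fin S // j ≠ jstar}) =>
          if h : (j : Fin S).val < S - 1 then r ⟨(j : Fin S).val, h⟩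
          else X - ∑ t : Fin (S - 1), r t) =
      PMF.uniformOfFintype ({j : Fin S // j ≠ jstar} → Fin n → ZMod m) := by
  haveI : NeZero m := ⟨hm.ne'⟩
  set F : (Fin (S - 1) → Fin n → ZMod m) → ({j : Fin S // j ≠ jstar} → Fin n → ZMod m) :=
    fun r (j : {j : Fin S // j ≠ jstar}) =>
      if h : (j : Fin S).val < S - 1 then r ⟨(j : Fin S).val, h⟩
      else X - ∑ t : Fin (S - 1), r t with hF
  have hcard : Fintype.card (Fin (S - 1) → Fin n → ZMod m) =
      Fintype.card ({j : Fin S // j ≠ jstar} → Fin n → ZMod m) := by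
    have h1 : Fintype.card {j : Fin S // j ≠ jstar} = S - 1 := by
      have := Fintype.card_subtype_compl (fun j : Fin S => j = jstar)
      simpa [Fintype.card_subtype_eq] using this
    simp [Fintype.card_fun, h1]
  have hinj : Function.Injective F := by
    intro r1 r2 h
    have key : ∀ s : Fin (S - 1), (⟨s.val, s.isLt.trans_le (Nat.sub_le S 1)⟩ : Fin S) ≠ jstar →
        r1 s = r2 s := by
      intro s hs
      have := congrFun h ⟨⟨s.val, s.isLt.trans_le (Nat.sub_le S 1)⟩, hs⟩
      simpa [hF, s.isLt] using this
    funext t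
    by_cases ht : (⟨t.val, t.isLt.trans_le (Nat.sub_le S 1)⟩ : Fin S) = jstar
    · -- jstar.val = t.val < S - 1; use the last server's share
      have hjv : jstar.val = t.val := by rw [← ht]
      have hlast : (⟨S - 1, by omega⟩ : Fin S) ≠ jstar := by
        intro hc
        have : (S - 1 : ℕ) = jstar.val := by rw [← hc]
        omega
      have hsum : ∑ s : Fin (S - 1), r1 s = ∑ s : Fin (S - 1), r2 s := by
        have := congrFun h ⟨⟨S - 1, by omega⟩, hlast⟩
        simp only [hF] at this
        rw [dif_neg (by simp)] at this
        rw [dif_neg (by simp)] at this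
        exact sub_right_injective this
      have hoth : ∀ s ∈ Finset.univ.erase t, r1 s = r2 s := by
        intro s hs
        have hst : s ≠ t := Finset.ne_of_mem_erase hs
        apply key
        intro hc
        apply hst
        have : s.val = jstar.val := by rw [← hc]
        exact Fin.ext (by omega)
      have e1 : r1 t + ∑ s ∈ Finset.univ.erase t, r1 s = ∑ s : Fin (S - 1), r1 s :=
        Finset.add_sum_erase _ _ (Finset.mem_univ t)
      have e2 : r2 t + ∑ s ∈ Finset.univ.erase t, r2 s = ∑ s : Fin (S - 1), r2 s :=
        Finset.add_sum_erase _ _ (Finset.mem_univ t)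
      have : r1 t + ∑ s ∈ Finset.univ.erase t, r1 s =
          r2 t + ∑ s ∈ Finset.univ.erase t, r1 s := by
        rw [e1, hsum, ← e2, Finset.sum_congr rfl hoth]
      exact add_right_cancel this
    · exact key t ht
  have hbij : Function.Bijective F :=
    (Fintype.bijective_iff_injective_and_card F).2 ⟨hinj, hcard⟩
  exact map_uniformOfFintype_equiv (Equiv.ofBijective F hbij)
end

section
/- Correctness of the Secure Sum of Signs decoding: Let C be a positive integer and let d_1,…,d_C be integers each belonging to {−1, 0, 1}. Let s̃ denote the sum in ℤ_{2C+1} of the residues of d_1,…,d_C modulo 2C+1, and let v ∈ {0,1,…,2C} be the canonical representative of s̃. Then Convert⁻¹(v), defined as v if v ∈ [0, C] and v − (2C+1) if v ∈ [C+1, 2C], equals the integer sum Σ_{i=1}^C d_i. -/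
open scoped BigOperators

/-- Correctness of the Secure Sum of Signs decoding: if each `d i ∈ {-1,0,1}`,
`s̃` is the sum in `ZMod (2C+1)` of the residues of the `d i`, and
`v ∈ {0,…,2C}` is its canonical representative, then
`Convert⁻¹(v) = v` if `v ≤ C`, else `v - (2C+1)`, equals `∑ i, d i` in `ℤ`. -/
theorem secure_sum_of_signs_correct (C : ℕ) (hC : 0 < C) (d : Fin C → ℤ)
    (hd : ∀ i, d i = -1 ∨ d i = 0 ∨ d i = 1) :
    (let v : ℤ := ((∑ i : Fin C, ((d i : ZMod (2 * C + 1)))).val : ℤ)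
     if v ≤ (C : ℤ) then v else v - (2 * (C : ℤ) + 1)) = ∑ i : Fin C, d i := by
  set S : ℤ := ∑ i : Fin C, d i with hS
  have hbound : |S| ≤ C := by
    calc |S| ≤ ∑ i : Fin C, |d i| := Finset.abs_sum_le_sum_abs _ _
    _ ≤ ∑ _i : Fin C, (1 : ℤ) := Finset.sum_le_sum (fun i _ => by
        rcases hd i with h | h | h <;> simp [h])
    _ = C := by simp
  have hlo : -(C : ℤ) ≤ S := (abs_le.mp hbound).1
  have hhi : S ≤ (C : ℤ) := (abs_le.mp hbound).2
  have hsum : (∑ i : Fin C, ((d i : ZMod (2 * C + 1)))) = (S : ZMod (2 * C + 1)) := by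
    rw [hS]; push_cast; rfl
  have hinst : NeZero (2 * C + 1) := ⟨by omega⟩
  set v : ℤ := ((∑ i : Fin C, ((d i : ZMod (2 * C + 1)))).val : ℤ) with hv
  have hvrange : 0 ≤ v ∧ v < 2 * C + 1 := by
    constructor
    · exact Int.ofNat_nonneg _
    · have := ZMod.val_lt (∑ i : Fin C, ((d i : ZMod (2 * C + 1))))
      omega
  have hmod : v ≡ S [ZMOD (2 * C + 1)] := by
    have h1 : ((v : ZMod (2 * C + 1))) = (S : ZMod (2 * C + 1)) := by
      rw [hv, hsum]
      push_cast [ZMod.natCast_val]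
      rfl
    exact (ZMod.intCast_eq_intCast_iff' _ _ _).mp h1
  have hdvd : ((2 * C + 1 : ℕ) : ℤ) ∣ (v - S) := Int.ModEq.dvd hmod.symm
  obtain ⟨k, hk⟩ := hdvd
  have hkval : v = S + (2 * C + 1) * k := by push_cast at hk ⊢; linarith
  show (if v ≤ (C : ℤ) then v else v - (2 * (C : ℤ) + 1)) = S
  by_cases h : v ≤ (C : ℤ)
  · simp only [if_pos h]
    -- v = S + (2C+1)k, -C ≤ S ≤ C, 0 ≤ v ≤ C ⇒ k = 0
    have hk0 : k = 0 := by nlinarith [hvrange.1, hvrange.2]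
    rw [hk0] at hkval; linarith
  · simp only [if_neg h]
    push_neg at h
    have hk1 : k = 1 := by nlinarith [hvrange.1, hvrange.2]
    rw [hk1] at hkval; linarith
end
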